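/- In the algebra 𝒟 of differential operators on ℂ[z,z⁻¹], the element σ = z²⊗z⁻¹∂_z − 2z⊗∂_z ∈ 𝒟⊗𝒟 is a Hochschild 1-cycle (i.e., b(σ) = [z², z⁻¹∂_z] − 2[z, ∂_z] = 0), and the Kac–Peterson cocycle Ψ(f(z)∂_z^m, g(z)∂_z^n) = (m!n!/(m+n+1)!)·Res_{z=0} dz·(f^{(n+1)}(z) g^{(m)}(z)) satisfies Ψ(σ) := Ψ(z², z⁻¹∂_z) − 2Ψ(z, ∂_z) = 1. -/

import Mathlib

/-!
STATEMENT 7. In the algebra `𝒟` of differential operators on `ℂ[z,z⁻¹]`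
(realized inside `Module.End ℂ (LaurentPolynomial ℂ)`, with `z` acting by
multiplication by `T 1` and `∂_z` the formal derivative), the element
`σ = z² ⊗ z⁻¹∂_z − 2 z ⊗ ∂_z` is a Hochschild 1-cycle, i.e.
`b(σ) = [z², z⁻¹∂_z] − 2[z, ∂_z] = 0`, and the Kac–Peterson cocycle
`Ψ(f(z)∂_z^m, g(z)∂_z^n) = (m!n!/(m+n+1)!)·Res_{z=0} dz·(f^{(n+1)}(z)·g^{(m)}(z))`
satisfies `Ψ(σ) = Ψ(z², z⁻¹∂_z) − 2Ψ(z, ∂_z) = 1`.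
-/

open LaurentPolynomial

/-- The derivative `∂_z` on Laurent polynomials, `z^n ↦ n z^{n-1}`. -/
noncomputable def lderiv : LaurentPolynomial ℂ →ₗ[ℂ] LaurentPolynomial ℂ :=
  (Finsupp.lsum ℂ fun n : ℤ =>
    (n : ℂ) • LinearMap.toSpanSingleton ℂ (LaurentPolynomial ℂ) (T (n - 1))) ∘ₗ
    (AddMonoidAlgebra.coeffLinearEquiv ℂ).toLinearMap

/-- The residue at `z = 0`: `Res_{z=0} p dz` is the coefficient of `z⁻¹` in `p`. -/
noncomputable def res (p : LaurentPolynomial ℂ) : ℂ := p.coeff (-1)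

/-- Multiplication by the Laurent polynomial `p`, as a differential operator of order `0`. -/
noncomputable def mulOp (p : LaurentPolynomial ℂ) : Module.End ℂ (LaurentPolynomial ℂ) :=
  LinearMap.mulLeft ℂ p

/-- The operator `∂_z` as an element of the algebra of differential operators. -/
noncomputable def derOp : Module.End ℂ (LaurentPolynomial ℂ) := lderiv

/-- The Kac–Peterson cocycle evaluated on the pair of differential operators
`f(z)∂_z^m` and `g(z)∂_z^n` (rank-one case, so the trace is trivial):
`Ψ(f∂^m, g∂^n) = (m!n!/(m+n+1)!) · Res_{z=0} (f^{(n+1)} g^{(m)}) dz`. -/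
noncomputable def KP (f : LaurentPolynomial ℂ) (m : ℕ) (g : LaurentPolynomial ℂ) (n : ℕ) : ℂ :=
  ((m.factorial : ℂ) * (n.factorial : ℂ) / ((m + n + 1).factorial : ℂ)) *
    res ((⇑lderiv)^[n + 1] f * (⇑lderiv)^[m] g)

/-!
Since `∂_z` is a derivation of `ℂ[z,z⁻¹]`, the commutator `[f, g∂_z]` is the multiplication
operator `-g f'`; so `b(σ) = -z⁻¹·2z + 2·1 = 0`. On monomials the cocycle is explicit,
`Ψ(z^a∂^m, z^b∂^n) = m!n!/(m+n+1)! · a(a-1)⋯(a-n) · b(b-1)⋯(b-m+1)` when `a + b = m + n` and `0`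
otherwise, which gives `Ψ(z², z⁻¹∂_z) = 1` and `Ψ(z, ∂_z) = 0`.
-/

theorem lderiv_T (n : ℤ) : lderiv (T n) = (n : ℂ) • T (n - 1) := by
  change lderiv (AddMonoidAlgebra.single n 1) = _
  rw [lderiv, LinearMap.comp_apply]
  change (Finsupp.lsum ℂ _) (Finsupp.single n (1 : ℂ)) = _
  rw [Finsupp.lsum_single]
  simp

theorem lderiv_C_mul (a : ℂ) (p : LaurentPolynomial ℂ) : lderiv (C a * p) = C a * lderiv p := by
  simp only [← smul_eq_C_mul, map_smul]

theorem lderiv_T_mul_T (m n : ℤ) :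
    lderiv (T m * T n) = lderiv (T m) * T n + T m * lderiv (T n) := by
  simp only [← T_add, lderiv_T, smul_mul_assoc, mul_smul_comm]
  rw [show m + n - 1 = m - 1 + n by ring, show m - 1 + n = m + (n - 1) by ring]
  push_cast
  module

theorem lderiv_mul (p q : LaurentPolynomial ℂ) :
    lderiv (p * q) = lderiv p * q + p * lderiv q := by
  induction p using LaurentPolynomial.induction_on' with
  | add p₁ p₂ h₁ h₂ => simp only [add_mul, map_add, h₁, h₂]; ring
  | C_mul_T m a =>
    induction q using LaurentPolynomial.induction_on' with
    | add q₁ q₂ h₁ h₂ => simp only [mul_add, map_add, h₁, h₂]; ring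
    | C_mul_T n b =>
      rw [show C a * T m * (C b * T n) = C (a * b) * (T m * T n) by rw [map_mul]; ring,
        lderiv_C_mul, lderiv_T_mul_T, lderiv_C_mul, lderiv_C_mul, map_mul]
      ring

theorem lderiv_iterate_T (k : ℕ) (n : ℤ) :
    (⇑lderiv)^[k] (T n) = (descPochhammer ℂ k).eval (n : ℂ) • T (n - k) := by
  induction k with
  | zero => simp
  | succ k ih =>
    rw [Function.iterate_succ_apply', ih, map_smul, lderiv_T, smul_smul, descPochhammer_succ_eval]
    push_cast
    ring_nf

theorem mulOp_mul (p q : LaurentPolynomial ℂ) : mulOp (p * q) = mulOp p * mulOp q :=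
  LinearMap.mulLeft_mul ℂ (LaurentPolynomial ℂ) p q

theorem mulOp_smul (c : ℂ) (p : LaurentPolynomial ℂ) : mulOp (c • p) = c • mulOp p := by
  ext q
  simp [mulOp]

theorem commutator_derOp_mulOp (p : LaurentPolynomial ℂ) :
    derOp * mulOp p - mulOp p * derOp = mulOp (lderiv p) := by
  ext q
  simp [derOp, mulOp, lderiv_mul]

theorem commutator_mulOp_mulOp_mul_derOp (f g : LaurentPolynomial ℂ) :
    mulOp f * (mulOp g * derOp) - mulOp g * derOp * mulOp f = -mulOp (g * lderiv f) := by
  rw [← mul_assoc, ← mulOp_mul, mul_comm f, mulOp_mul, mul_assoc, mul_assoc, ← mul_sub,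
    ← neg_sub, commutator_derOp_mulOp, mulOp_mul]
  exact mul_neg _ _

theorem res_smul_T (c : ℂ) (n : ℤ) : res (c • T n) = if n = -1 then c else 0 := by
  simp [res]

theorem KP_T (a : ℤ) (m : ℕ) (b : ℤ) (n : ℕ) :
    KP (T a) m (T b) n = if a + b = m + n then
      m.factorial * n.factorial / (m + n + 1).factorial *
        (descPochhammer ℂ (n + 1)).eval (a : ℂ) * (descPochhammer ℂ m).eval (b : ℂ) else 0 := by
  rw [KP, lderiv_iterate_T, lderiv_iterate_T, smul_mul_smul, ← T_add, res_smul_T]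
  have h : a - ↑(n + 1) + (b - ↑m) = -1 ↔ a + b = m + n := by omega
  simp only [h]
  split_ifs <;> ring

/-- `σ = z²⊗z⁻¹∂_z − 2z⊗∂_z` is a Hochschild 1-cycle and `Ψ(σ) = 1`. -/
theorem kac_peterson_pairing_with_hochschild_cycle :
    (mulOp (T 2) * (mulOp (T (-1)) * derOp) - (mulOp (T (-1)) * derOp) * mulOp (T 2))
        - (2 : ℂ) • (mulOp (T 1) * derOp - derOp * mulOp (T 1)) = 0 ∧
    KP (T 2) 0 (T (-1)) 1 - 2 * KP (T 1) 0 1 1 = 1 := by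
  constructor
  · rw [commutator_mulOp_mulOp_mul_derOp, ← neg_sub (derOp * _), commutator_derOp_mulOp,
      lderiv_T, lderiv_T, mul_smul_comm, ← T_add]
    norm_num [mulOp_smul]
  · rw [← T_zero, KP_T, KP_T]
    norm_num [descPochhammer_succ_eval]
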